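/- Let H be a connected linear k-uniform hypergraph (k ≥ 3) with no Berge-B_s, s ≥ 2. Then for any vertex y and any x ∈ N_y, the number of edges containing x that intersect N_y in at least two vertices satisfies Σ_{i=2}^{k} e_i^x(N_y) ≤ (2k-3)(s-1) + 1 ≤ 2(k-1)(s-1). -/

import Mathlib

attribute [local instance] Classical.propDecidable

/-- The degree of a vertex. -/
def hDeg {V : Type*} [DecidableEq V] (E : Finset (Finset V)) (v : V) : ℕ :=
  (E.filter (fun e => v ∈ e)).card

/-- The neighbourhood of `v`. -/
def hNbhd {V : Type*} [Fintype V] [DecidableEq V] (E : Finset (Finset V)) (v : V) :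
    Finset V :=
  Finset.univ.filter (fun w => w ≠ v ∧ ∃ e ∈ E, v ∈ e ∧ w ∈ e)

/-- `H` contains no Berge-`B_s`, where `B_s` is the book of `s` triangles sharing a
common edge `{a,b}`: there do not exist distinct vertices `a, b, c_1, …, c_s` and
`2s+1` distinct hyperedges `e₀ ⊇ {a,b}`, `f i ⊇ {a, c i}`, `g i ⊇ {b, c i}`. -/
def BergeBookFree {V : Type*} (E : Finset (Finset V)) (s : ℕ) : Prop :=
  ¬ ∃ (a b : V) (c : Fin s → V) (e₀ : Finset V) (f g : Fin s → Finset V),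
      a ≠ b ∧ Function.Injective c ∧ (∀ i, c i ≠ a ∧ c i ≠ b) ∧
      e₀ ∈ E ∧ a ∈ e₀ ∧ b ∈ e₀ ∧
      (∀ i, f i ∈ E ∧ a ∈ f i ∧ c i ∈ f i) ∧
      (∀ i, g i ∈ E ∧ b ∈ g i ∧ c i ∈ g i) ∧
      Function.Injective f ∧ Function.Injective g ∧
      (∀ i j, f i ≠ g j) ∧ (∀ i, e₀ ≠ f i ∧ e₀ ≠ g i)


/-!
Let `e₀` be the edge through `x` and `y`. For each edge `e` through `x` meeting `N_y` twice,
pick `z e ∈ e ∩ N_y` other than `x` and an edge `g e` through `y` and `z e`. By linearity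
distinct `e` have distinct `z e`, so at most `k - 1` of these edges have `z e ∈ e₀`, and each
edge through `y` is `g e` for at most `k - 1` of the others. Among the others, `s` edges with
distinct `g e` would form, together with `e₀`, a Berge-`B_s` with spine `{x, y}`. Hence there
are at most `(k - 1) s` such edges, and `(k - 1) s ≤ (2k - 3)(s - 1) + 1`.
-/

open Finset

section Hypergraph

variable {V : Type*} [DecidableEq V]

def IsLinearHypergraph (E : Finset (Finset V)) : Prop :=
  ∀ e ∈ E, ∀ f ∈ E, e ≠ f → #(e ∩ f) ≤ 1

theorem IsLinearHypergraph.eq_of_mem_of_mem {E : Finset (Finset V)} (hE : IsLinearHypergraph E)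
    {e f : Finset V} (he : e ∈ E) (hf : f ∈ E) {u v : V} (huv : u ≠ v)
    (hue : u ∈ e) (hve : v ∈ e) (huf : u ∈ f) (hvf : v ∈ f) : e = f := by
  by_contra hef
  have : #({u, v} : Finset V) ≤ #(e ∩ f) :=
    card_le_card (by simp [insert_subset_iff, *])
  have := hE e he f hf hef
  rw [card_pair huv] at *
  omega

theorem mem_hNbhd [Fintype V] {E : Finset (Finset V)} {v w : V} :
    w ∈ hNbhd E v ↔ w ≠ v ∧ ∃ e ∈ E, v ∈ e ∧ w ∈ e := by
  simp [hNbhd]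

theorem exists_ne_mem_of_two_le_card_inter_hNbhd [Fintype V] {E : Finset (Finset V)}
    {e : Finset V} {y : V} (he : 2 ≤ #(e ∩ hNbhd E y)) (x : V) :
    ∃ w, (w ∈ e ∧ w ≠ x ∧ w ≠ y) ∧ ∃ h ∈ E, y ∈ h ∧ w ∈ h := by
  obtain ⟨w, hw, hwx⟩ := exists_mem_ne he x
  obtain ⟨hwe, hwy, h, hh⟩ := (mem_inter.mp hw).imp_right mem_hNbhd.mp
  exact ⟨w, ⟨hwe, hwx, hwy⟩, h, hh⟩

theorem IsLinearHypergraph.not_bergeBookFree {E : Finset (Finset V)} (hE : IsLinearHypergraph E)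
    {s : ℕ} {a b : V} (hab : a ≠ b) {e₀ : Finset V} (he₀ : e₀ ∈ E) (ha : a ∈ e₀) (hb : b ∈ e₀)
    {c : Fin s → V} {f g : Fin s → Finset V} (hc : ∀ i, c i ∉ e₀)
    (hf : ∀ i, f i ∈ E ∧ a ∈ f i ∧ c i ∈ f i) (hg : ∀ i, g i ∈ E ∧ b ∈ g i ∧ c i ∈ g i)
    (hf_inj : Function.Injective f) (hg_inj : Function.Injective g) :
    ¬ BergeBookFree E s := by
  have hca : ∀ i, c i ≠ a := fun i h => hc i (h ▸ ha)
  have hcb : ∀ i, c i ≠ b := fun i h => hc i (h ▸ hb)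
  refine not_not.mpr ⟨a, b, c, e₀, f, g, hab, fun i j hij => hf_inj ?_, fun i => ⟨hca i, hcb i⟩,
    he₀, ha, hb, hf, hg, hf_inj, hg_inj, fun i j hfg => ?_, fun i => ⟨?_, ?_⟩⟩
  · exact hE.eq_of_mem_of_mem (hf i).1 (hf j).1 (hca i) (hf i).2.2 (hf i).2.1
      (hij ▸ (hf j).2.2) (hf j).2.1
  · have : f i = e₀ := hE.eq_of_mem_of_mem (hf i).1 he₀ hab (hf i).2.1 (hfg ▸ (hg j).2.1) ha hb
    exact hc i (this ▸ (hf i).2.2)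
  · rintro rfl; exact hc i (hf i).2.2
  · rintro rfl; exact hc i (hg i).2.2

end Hypergraph

theorem sum_Icc_card_filter_eq_card_filter_le {α : Type*} (S : Finset α) (φ : α → ℕ) {m k : ℕ}
    (hφ : ∀ a ∈ S, φ a ≤ k) :
    ∑ i ∈ Icc m k, #{a ∈ S | φ a = i} = #{a ∈ S | m ≤ φ a} := by
  rw [card_eq_sum_card_fiberwise (f := φ) (t := Icc m k)
    (fun a ha => by simpa [(mem_filter.mp ha).2] using hφ a (mem_filter.mp ha).1)]
  refine sum_congr rfl fun i hi => congrArg card ?_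
  rw [filter_filter]
  refine filter_congr fun a _ => ?_
  have := (mem_Icc.mp hi).1
  constructor
  · rintro rfl; simp [this]
  · exact fun h => h.2

theorem exists_fin_injective_comp_of_le_card_image {α β : Type*} [DecidableEq β] {S : Finset α}
    {g : α → β} {n : ℕ} (hn : n ≤ #(S.image g)) :
    ∃ f : Fin n → α, (∀ i, f i ∈ S) ∧ Function.Injective (g ∘ f) := by
  obtain ⟨T, hTS, hT⟩ := exists_subset_card_eq hn
  have hpre : ∀ t : T, ∃ a ∈ S, g a = t := fun t => mem_image.mp (hTS t.2)
  choose r hrS hrg using hpre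
  refine ⟨fun i => r (T.equivFinOfCardEq hT |>.symm i), fun i => hrS _, fun i j hij => ?_⟩
  simp only [Function.comp_apply, hrg] at hij
  exact (T.equivFinOfCardEq hT).symm.injective (Subtype.ext hij)

section Counting

variable {α V : Type*} [DecidableEq V] {E : Finset (Finset V)} {k : ℕ}

theorem card_le_pred_of_injOn_erase (hunif : ∀ e ∈ E, #e = k) {h : Finset V} (hh : h ∈ E)
    {v : V} (hv : v ∈ h) {S : Finset α} {z : α → V} (hz : ∀ a ∈ S, z a ∈ h ∧ z a ≠ v)
    (hinj : Set.InjOn z S) : #S ≤ k - 1 := by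
  have := card_le_card_of_injOn z (t := h.erase v)
    (fun a ha => mem_erase.mpr ⟨(hz a ha).2, (hz a ha).1⟩) hinj
  rwa [card_erase_of_mem hv, hunif h hh] at this

theorem card_filter_two_le_card_inter_hNbhd_le [Fintype V] (hlin : IsLinearHypergraph E)
    (hunif : ∀ e ∈ E, #e = k) {s : ℕ} (hfree : BergeBookFree E s) {x y : V} (hxy : x ≠ y)
    {e₀ : Finset V} (he₀ : e₀ ∈ E) (hxe₀ : x ∈ e₀) (hye₀ : y ∈ e₀) :
    #{e ∈ E | x ∈ e ∧ 2 ≤ #(e ∩ hNbhd E y)} ≤ (k - 1) * s := by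
  set F := {e ∈ E | x ∈ e ∧ 2 ≤ #(e ∩ hNbhd E y)}
  have hcompanion : ∀ e ∈ F, ∃ w, (w ∈ e ∧ w ≠ x ∧ w ≠ y) ∧ ∃ h ∈ E, y ∈ h ∧ w ∈ h :=
    fun e he => exists_ne_mem_of_two_le_card_inter_hNbhd (mem_filter.mp he).2.2 x
  have : Nonempty V := ⟨x⟩
  choose! z hz g hg using hcompanion
  have hFE : ∀ e ∈ F, e ∈ E ∧ x ∈ e := fun e he => ⟨(mem_filter.mp he).1, (mem_filter.mp he).2.1⟩
  have hzinj : Set.InjOn z F := fun e he e' he' hee' =>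
    hlin.eq_of_mem_of_mem (hFE e he).1 (hFE e' he').1 (hz e he).2.1.symm (hFE e he).2
      (hz e he).1 (hFE e' he').2 (hee' ▸ (hz e' he').1)
  set F₁ := {e ∈ F | z e ∉ e₀}
  have hF₀ : #{e ∈ F | z e ∈ e₀} ≤ k - 1 :=
    card_le_pred_of_injOn_erase hunif he₀ hxe₀
      (fun e he => ⟨(mem_filter.mp he).2, (hz e (mem_filter.mp he).1).2.1⟩)
      (hzinj.mono (filter_subset _ _))
  have hF₁ : #F₁ ≤ (k - 1) * #(F₁.image g) := by
    refine card_le_mul_card_image F₁ (k - 1) fun h hh => ?_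
    obtain ⟨e, he, rfl⟩ := mem_image.mp hh
    have heF := (mem_filter.mp he).1
    refine card_le_pred_of_injOn_erase hunif (hg e heF).1 (hg e heF).2.1 (fun e' he' => ?_)
      (hzinj.mono fun e' he' => (mem_filter.mp (mem_filter.mp he').1).1)
    obtain ⟨he'F₁, hge'⟩ := mem_filter.mp he'
    have he'F := (mem_filter.mp he'F₁).1
    exact ⟨hge' ▸ (hg e' he'F).2.2, (hz e' he'F).2.2⟩
  have himage : #(F₁.image g) < s := by
    by_contra! hs
    obtain ⟨f, hfF₁, hgf⟩ := exists_fin_injective_comp_of_le_card_image hs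
    have hfF : ∀ i, f i ∈ F := fun i => (mem_filter.mp (hfF₁ i)).1
    exact hlin.not_bergeBookFree hxy he₀ hxe₀ hye₀ (c := z ∘ f)
      (fun i => (mem_filter.mp (hfF₁ i)).2) (fun i => ⟨(hFE _ (hfF i)).1, (hFE _ (hfF i)).2,
        (hz _ (hfF i)).1⟩) (fun i => hg _ (hfF i)) hgf.of_comp hgf hfree
  calc #F = #{e ∈ F | z e ∈ e₀} + #F₁ := (card_filter_add_card_filter_not _).symm
    _ ≤ (k - 1) + (k - 1) * #(F₁.image g) := add_le_add hF₀ hF₁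
    _ ≤ (k - 1) * s := by nlinarith

end Counting

theorem edges_through_x_bound_general {V : Type*} [Fintype V] [DecidableEq V]
    (E : Finset (Finset V)) (k s : ℕ) (hk : 3 ≤ k) (hs : 2 ≤ s)
    (hunif : ∀ e ∈ E, e.card = k)
    (hlin : ∀ e ∈ E, ∀ f ∈ E, e ≠ f → (e ∩ f).card ≤ 1)
    (hfree : BergeBookFree E s)
    (y : V) (x : V) (hx : x ∈ hNbhd E y) :
    (∑ i ∈ Finset.Icc 2 k,
        (E.filter (fun e => x ∈ e ∧ (e ∩ hNbhd E y).card = i)).card)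
      ≤ (2 * k - 3) * (s - 1) + 1 ∧
    (2 * k - 3) * (s - 1) + 1 ≤ 2 * (k - 1) * (s - 1) := by
  obtain ⟨hxy, e₀, he₀, hye₀, hxe₀⟩ := mem_hNbhd.mp hx
  have hsum := sum_Icc_card_filter_eq_card_filter_le {e ∈ E | x ∈ e}
    (fun e => #(e ∩ hNbhd E y)) (m := 2)
    (fun e he => (card_le_card inter_subset_left).trans (hunif e (mem_filter.mp he).1).le)
  simp only [filter_filter] at hsum
  rw [hsum]
  have hcount := card_filter_two_le_card_inter_hNbhd_le hlin hunif hfree hxy he₀ hxe₀ hye₀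
  obtain ⟨k, rfl⟩ : ∃ m, k = m + 3 := ⟨k - 3, by omega⟩
  obtain ⟨s, rfl⟩ : ∃ m, s = m + 2 := ⟨s - 2, by omega⟩
  -- `(2k - 3)(s - 1) + 1 - (k - 1)s = (k - 2)(s - 2)`
  refine ⟨hcount.trans ?_, ?_⟩ <;>
  · simp only [show ∀ n, 2 * (n + 3) - 3 = 2 * n + 3 by omega,
      show ∀ n, n + 3 - 1 = n + 2 by omega, show s + 2 - 1 = s + 1 by omega]
    nlinarith

/-- In a connected linear `k`-uniform Berge-`B_s`-free hypergraph (`k ≥ 3`, `s ≥ 2`),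
for any vertex `y` and any `x ∈ N_y`,
`Σ_{i=2}^{k} e_i^x(N_y) ≤ (2k-3)(s-1) + 1 ≤ 2(k-1)(s-1)`, where `e_i^x(N_y)` counts
edges containing `x` and meeting `N_y` in exactly `i` vertices. -/
theorem edges_through_x_bound {V : Type*} [Fintype V] [DecidableEq V]
    (E : Finset (Finset V)) (k s : ℕ) (hk : 3 ≤ k) (hs : 2 ≤ s)
    (hunif : ∀ e ∈ E, e.card = k)
    (hlin : ∀ e ∈ E, ∀ f ∈ E, e ≠ f → (e ∩ f).card ≤ 1)
    (hconn : ∀ u v : V, Relation.ReflTransGen (fun a b => ∃ e ∈ E, a ∈ e ∧ b ∈ e) u v)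
    (hfree : BergeBookFree E s)
    (y : V) (x : V) (hx : x ∈ hNbhd E y) :
    (∑ i ∈ Finset.Icc 2 k,
        (E.filter (fun e => x ∈ e ∧ (e ∩ hNbhd E y).card = i)).card)
      ≤ (2 * k - 3) * (s - 1) + 1 ∧
    (2 * k - 3) * (s - 1) + 1 ≤ 2 * (k - 1) * (s - 1) :=
  edges_through_x_bound_general E k s hk hs hunif hlin hfree y x hx
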